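/- arXiv:2508.00595 — 4 statements merged into one kernel-verified Lean document; each statement's English description precedes it below -/
import Mathlib

section
/- Let H₁, H₂ be algebras with coassociative coproducts Δ₁, Δ₂, and form the tensor product algebra H = H₁ ⊗ H₂ with coproduct Δ⊗(x ⊗ y) = (Δ₁(x))₁₃ (Δ₂(y))₂₄ (legs 1,3 carry H₁ and legs 2,4 carry H₂). If X ∈ H₁ ⊗ H₂ is an invertible skew bicharacter, i.e. (Δ₁ ⊗ id)(X) = X₁₃ X₂₃ and (id ⊗ Δ₂)(X) = X₁₃ X₁₂, then the element Ω := X₍₃₂₎ ∈ (H₁⊗H₂) ⊗ (H₁⊗H₂) (X placed in tensor legs 3 and 2) is an invertible 2-cocycle for (H, Δ⊗). -/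
open scoped TensorProduct

/-- Leg `(1,2)` embedding of `H ⊗ H` into `H ⊗ H ⊗ H`. -/
noncomputable def leg12 (R H : Type*) [CommRing R] [Ring H] [Algebra R H] :
    (H ⊗[R] H) →ₐ[R] H ⊗[R] (H ⊗[R] H) :=
  Algebra.TensorProduct.map (AlgHom.id R H) Algebra.TensorProduct.includeLeft

/-- Leg `(2,3)` embedding of `H ⊗ H` into `H ⊗ H ⊗ H`. -/
noncomputable def leg23 (R H : Type*) [CommRing R] [Ring H] [Algebra R H] :
    (H ⊗[R] H) →ₐ[R] H ⊗[R] (H ⊗[R] H) :=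
  Algebra.TensorProduct.includeRight

/-- `Δ ⊗ id`, viewed as a map into the right-associated triple tensor product. -/
noncomputable def deltaLeft {R H : Type*} [CommRing R] [Ring H] [Algebra R H]
    (Δ : H →ₐ[R] H ⊗[R] H) : (H ⊗[R] H) →ₐ[R] H ⊗[R] (H ⊗[R] H) :=
  (Algebra.TensorProduct.assoc R R R H H H).toAlgHom.comp
    (Algebra.TensorProduct.map Δ (AlgHom.id R H))

/-- `id ⊗ Δ`. -/
noncomputable def deltaRight {R H : Type*} [CommRing R] [Ring H] [Algebra R H]
    (Δ : H →ₐ[R] H ⊗[R] H) : (H ⊗[R] H) →ₐ[R] H ⊗[R] (H ⊗[R] H) :=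
  Algebra.TensorProduct.map (AlgHom.id R H) Δ

/-- Coassociativity of a coproduct `Δ`. -/
def Coassoc {R H : Type*} [CommRing R] [Ring H] [Algebra R H]
    (Δ : H →ₐ[R] H ⊗[R] H) : Prop :=
  ∀ x : H, deltaLeft Δ (Δ x) = deltaRight Δ (Δ x)

/-- The 2-cocycle identity `Ω₁₂ (Δ⊗id)(Ω) = Ω₂₃ (id⊗Δ)(Ω)`. -/
def IsTwoCocycle {R H : Type*} [CommRing R] [Ring H] [Algebra R H]
    (Δ : H →ₐ[R] H ⊗[R] H) (Ω : H ⊗[R] H) : Prop :=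
  leg12 R H Ω * deltaLeft Δ Ω = leg23 R H Ω * deltaRight Δ Ω


section TwoAlgebras

variable (R H₁ H₂ : Type*) [CommRing R] [Ring H₁] [Algebra R H₁] [Ring H₂] [Algebra R H₂]

/-- Leg `(1,3)` embedding of `H₁ ⊗ H₂` into `H₁ ⊗ H₁ ⊗ H₂`. -/
noncomputable def bleg13 : (H₁ ⊗[R] H₂) →ₐ[R] H₁ ⊗[R] (H₁ ⊗[R] H₂) :=
  Algebra.TensorProduct.map (AlgHom.id R H₁) Algebra.TensorProduct.includeRight

/-- Leg `(2,3)` embedding of `H₁ ⊗ H₂` into `H₁ ⊗ H₁ ⊗ H₂`. -/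
noncomputable def bleg23 : (H₁ ⊗[R] H₂) →ₐ[R] H₁ ⊗[R] (H₁ ⊗[R] H₂) :=
  Algebra.TensorProduct.includeRight

/-- Leg `(1,3)` embedding of `H₁ ⊗ H₂` into `H₁ ⊗ H₂ ⊗ H₂`. -/
noncomputable def cleg13 : (H₁ ⊗[R] H₂) →ₐ[R] H₁ ⊗[R] (H₂ ⊗[R] H₂) :=
  Algebra.TensorProduct.map (AlgHom.id R H₁) Algebra.TensorProduct.includeRight

/-- Leg `(1,2)` embedding of `H₁ ⊗ H₂` into `H₁ ⊗ H₂ ⊗ H₂`. -/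
noncomputable def cleg12 : (H₁ ⊗[R] H₂) →ₐ[R] H₁ ⊗[R] (H₂ ⊗[R] H₂) :=
  Algebra.TensorProduct.map (AlgHom.id R H₁) Algebra.TensorProduct.includeLeft

variable {R H₁ H₂}

/-- `Δ₁ ⊗ id : H₁ ⊗ H₂ → H₁ ⊗ H₁ ⊗ H₂`. -/
noncomputable def deltaOneLeft (Δ₁ : H₁ →ₐ[R] H₁ ⊗[R] H₁) :
    (H₁ ⊗[R] H₂) →ₐ[R] H₁ ⊗[R] (H₁ ⊗[R] H₂) :=
  (Algebra.TensorProduct.assoc R R R H₁ H₁ H₂).toAlgHom.comp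
    (Algebra.TensorProduct.map Δ₁ (AlgHom.id R H₂))

/-- `id ⊗ Δ₂ : H₁ ⊗ H₂ → H₁ ⊗ H₂ ⊗ H₂`. -/
noncomputable def deltaTwoRight (Δ₂ : H₂ →ₐ[R] H₂ ⊗[R] H₂) :
    (H₁ ⊗[R] H₂) →ₐ[R] H₁ ⊗[R] (H₂ ⊗[R] H₂) :=
  Algebra.TensorProduct.map (AlgHom.id R H₁) Δ₂

/-- The skew bicharacter conditions
`(Δ₁ ⊗ id)(X) = X₁₃ X₂₃` and `(id ⊗ Δ₂)(X) = X₁₃ X₁₂`. -/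
def IsSkewBichar (Δ₁ : H₁ →ₐ[R] H₁ ⊗[R] H₁) (Δ₂ : H₂ →ₐ[R] H₂ ⊗[R] H₂)
    (X : H₁ ⊗[R] H₂) : Prop :=
  deltaOneLeft Δ₁ X = bleg13 R H₁ H₂ X * bleg23 R H₁ H₂ X ∧
  deltaTwoRight Δ₂ X = cleg13 R H₁ H₂ X * cleg12 R H₁ H₂ X

variable (R H₁ H₂)

/-- Placement of `X ∈ H₁ ⊗ H₂` into legs `3` and `2` of
`(H₁ ⊗ H₂) ⊗ (H₁ ⊗ H₂)`, i.e. `a ⊗ b ↦ (1 ⊗ b) ⊗ (a ⊗ 1)`. -/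
noncomputable def leg32 : (H₁ ⊗[R] H₂) →ₐ[R] (H₁ ⊗[R] H₂) ⊗[R] (H₁ ⊗[R] H₂) :=
  (Algebra.TensorProduct.map
      (Algebra.TensorProduct.includeRight : H₂ →ₐ[R] H₁ ⊗[R] H₂)
      (Algebra.TensorProduct.includeLeft : H₁ →ₐ[R] H₁ ⊗[R] H₂)).comp
    (Algebra.TensorProduct.comm R H₁ H₂).toAlgHom

/-- Placement of `X ∈ H₁ ⊗ H₂` into legs `1` and `4` of
`(H₁ ⊗ H₂) ⊗ (H₁ ⊗ H₂)`, i.e. `a ⊗ b ↦ (a ⊗ 1) ⊗ (1 ⊗ b)`. -/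
noncomputable def leg14 : (H₁ ⊗[R] H₂) →ₐ[R] (H₁ ⊗[R] H₂) ⊗[R] (H₁ ⊗[R] H₂) :=
  Algebra.TensorProduct.map
    (Algebra.TensorProduct.includeLeft : H₁ →ₐ[R] H₁ ⊗[R] H₂)
    (Algebra.TensorProduct.includeRight : H₂ →ₐ[R] H₁ ⊗[R] H₂)

variable {R H₁ H₂}

/-- The tensor product coproduct `Δ⊗(x ⊗ y) = Δ₁(x)₁₃ Δ₂(y)₂₄` on `H₁ ⊗ H₂`. -/
noncomputable def deltaTensor (Δ₁ : H₁ →ₐ[R] H₁ ⊗[R] H₁) (Δ₂ : H₂ →ₐ[R] H₂ ⊗[R] H₂) :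
    (H₁ ⊗[R] H₂) →ₐ[R] (H₁ ⊗[R] H₂) ⊗[R] (H₁ ⊗[R] H₂) :=
  (Algebra.TensorProduct.tensorTensorTensorComm R R R R H₁ H₁ H₂ H₂).toAlgHom.comp
    (Algebra.TensorProduct.map Δ₁ Δ₂)

end TwoAlgebras
section Aux

open Algebra.TensorProduct

variable (R H₁ H₂ : Type*) [CommRing R] [Ring H₁] [Algebra R H₁] [Ring H₂] [Algebra R H₂]

/-- Placement of `X` at legs (3,2) of the six-fold tensor `(H₁⊗H₂)⊗(H₁⊗H₂)⊗(H₁⊗H₂)`. -/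
noncomputable def p32 :
    (H₁ ⊗[R] H₂) →ₐ[R] (H₁ ⊗[R] H₂) ⊗[R] ((H₁ ⊗[R] H₂) ⊗[R] (H₁ ⊗[R] H₂)) :=
  (leg12 R (H₁ ⊗[R] H₂)).comp (leg32 R H₁ H₂)

noncomputable def p54 :
    (H₁ ⊗[R] H₂) →ₐ[R] (H₁ ⊗[R] H₂) ⊗[R] ((H₁ ⊗[R] H₂) ⊗[R] (H₁ ⊗[R] H₂)) :=
  (leg23 R (H₁ ⊗[R] H₂)).comp (leg32 R H₁ H₂)

noncomputable def p52 :
    (H₁ ⊗[R] H₂) →ₐ[R] (H₁ ⊗[R] H₂) ⊗[R] ((H₁ ⊗[R] H₂) ⊗[R] (H₁ ⊗[R] H₂)) :=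
  (Algebra.TensorProduct.map (includeRight : H₂ →ₐ[R] H₁ ⊗[R] H₂)
      ((includeRight :
          (H₁ ⊗[R] H₂) →ₐ[R] (H₁ ⊗[R] H₂) ⊗[R] (H₁ ⊗[R] H₂)).comp
        (includeLeft : H₁ →ₐ[R] H₁ ⊗[R] H₂))).comp
    (Algebra.TensorProduct.comm R H₁ H₂).toAlgHom

noncomputable def Gmap :
    (H₁ ⊗[R] (H₂ ⊗[R] H₂)) →ₐ[R] (H₁ ⊗[R] H₂) ⊗[R] ((H₁ ⊗[R] H₂) ⊗[R] (H₁ ⊗[R] H₂)) :=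
  (Algebra.TensorProduct.map (includeRight : H₂ →ₐ[R] H₁ ⊗[R] H₂)
      (Algebra.TensorProduct.map (includeRight : H₂ →ₐ[R] H₁ ⊗[R] H₂)
        (includeLeft : H₁ →ₐ[R] H₁ ⊗[R] H₂))).comp
    ((Algebra.TensorProduct.assoc R R R H₂ H₂ H₁).toAlgHom.comp
      (Algebra.TensorProduct.comm R H₁ (H₂ ⊗[R] H₂)).toAlgHom)

noncomputable def Gmap' :
    (H₁ ⊗[R] (H₁ ⊗[R] H₂)) →ₐ[R] (H₁ ⊗[R] H₂) ⊗[R] ((H₁ ⊗[R] H₂) ⊗[R] (H₁ ⊗[R] H₂)) :=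
  (Algebra.TensorProduct.map (includeRight : H₂ →ₐ[R] H₁ ⊗[R] H₂)
      ((Algebra.TensorProduct.map (includeLeft : H₁ →ₐ[R] H₁ ⊗[R] H₂)
          (includeLeft : H₁ →ₐ[R] H₁ ⊗[R] H₂)).comp
        (Algebra.TensorProduct.comm R H₁ H₁).toAlgHom)).comp
    ((Algebra.TensorProduct.assoc R R R H₂ H₁ H₁).toAlgHom.comp
      ((Algebra.TensorProduct.comm R H₁ (H₂ ⊗[R] H₁)).toAlgHom.comp
        (Algebra.TensorProduct.map (AlgHom.id R H₁)
          (Algebra.TensorProduct.comm R H₁ H₂).toAlgHom)))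

variable {R H₁ H₂}

@[simp] lemma leg32_tmul (a : H₁) (b : H₂) :
    leg32 R H₁ H₂ (a ⊗ₜ[R] b) = ((1 : H₁) ⊗ₜ[R] b) ⊗ₜ[R] (a ⊗ₜ[R] (1 : H₂)) := by
  simp [leg32]

@[simp] lemma p32_tmul (a : H₁) (b : H₂) :
    p32 R H₁ H₂ (a ⊗ₜ[R] b) =
      ((1 : H₁) ⊗ₜ[R] b) ⊗ₜ[R] ((a ⊗ₜ[R] (1 : H₂)) ⊗ₜ[R] (1 : H₁ ⊗[R] H₂)) := by
  simp [p32, leg12]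

@[simp] lemma p54_tmul (a : H₁) (b : H₂) :
    p54 R H₁ H₂ (a ⊗ₜ[R] b) =
      (1 : H₁ ⊗[R] H₂) ⊗ₜ[R] (((1 : H₁) ⊗ₜ[R] b) ⊗ₜ[R] (a ⊗ₜ[R] (1 : H₂))) := by
  simp [p54, leg23]

@[simp] lemma p52_tmul (a : H₁) (b : H₂) :
    p52 R H₁ H₂ (a ⊗ₜ[R] b) =
      ((1 : H₁) ⊗ₜ[R] b) ⊗ₜ[R] ((1 : H₁ ⊗[R] H₂) ⊗ₜ[R] (a ⊗ₜ[R] (1 : H₂))) := by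
  simp [p52]

@[simp] lemma Gmap_tmul (a : H₁) (b c : H₂) :
    Gmap R H₁ H₂ (a ⊗ₜ[R] (b ⊗ₜ[R] c)) =
      ((1 : H₁) ⊗ₜ[R] b) ⊗ₜ[R] (((1 : H₁) ⊗ₜ[R] c) ⊗ₜ[R] (a ⊗ₜ[R] (1 : H₂))) := by
  simp [Gmap]

@[simp] lemma Gmap'_tmul (a a' : H₁) (b : H₂) :
    Gmap' R H₁ H₂ (a ⊗ₜ[R] (a' ⊗ₜ[R] b)) =
      ((1 : H₁) ⊗ₜ[R] b) ⊗ₜ[R] ((a ⊗ₜ[R] (1 : H₂)) ⊗ₜ[R] (a' ⊗ₜ[R] (1 : H₂))) := by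
  simp [Gmap']

end Aux
section Aux2

open Algebra.TensorProduct

set_option maxHeartbeats 1000000
set_option synthInstance.maxHeartbeats 1000000

variable {R H₁ H₂ : Type*} [CommRing R] [Ring H₁] [Algebra R H₁] [Ring H₂] [Algebra R H₂]
variable (Δ₁ : H₁ →ₐ[R] H₁ ⊗[R] H₁) (Δ₂ : H₂ →ₐ[R] H₂ ⊗[R] H₂)

lemma keyL (x : H₁ ⊗[R] H₂) :
    deltaLeft (deltaTensor Δ₁ Δ₂) (leg32 R H₁ H₂ x)
      = Gmap R H₁ H₂ (deltaTwoRight Δ₂ x) := by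
  induction x using TensorProduct.induction_on with
  | zero => simp
  | add u v hu hv => simp only [map_add, hu, hv]
  | tmul a b =>
    have h1 : deltaTwoRight (Δ₂ := Δ₂) (H₁ := H₁) (a ⊗ₜ[R] b) = a ⊗ₜ[R] (Δ₂ b) := by
      simp [deltaTwoRight]
    rw [leg32_tmul, h1]
    have h2 : deltaLeft (deltaTensor Δ₁ Δ₂)
        ((((1 : H₁) ⊗ₜ[R] b) : H₁ ⊗[R] H₂) ⊗ₜ[R] (a ⊗ₜ[R] (1 : H₂)))
        = (Algebra.TensorProduct.assoc R R R (H₁ ⊗[R] H₂) (H₁ ⊗[R] H₂) (H₁ ⊗[R] H₂))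
            (((Algebra.TensorProduct.tensorTensorTensorComm R R R R H₁ H₁ H₂ H₂)
                ((1 : H₁ ⊗[R] H₁) ⊗ₜ[R] (Δ₂ b))) ⊗ₜ[R] (a ⊗ₜ[R] (1 : H₂))) := by
      simp [deltaLeft, deltaTensor]
    rw [h2]
    generalize (Δ₂ b) = y
    induction y using TensorProduct.induction_on with
    | zero => simp
    | add u v hu hv =>
      simp only [TensorProduct.tmul_add, TensorProduct.add_tmul, map_add, hu, hv]
    | tmul b' b'' => simp [Algebra.TensorProduct.one_def]

lemma keyR (x : H₁ ⊗[R] H₂) :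
    deltaRight (deltaTensor Δ₁ Δ₂) (leg32 R H₁ H₂ x)
      = Gmap' R H₁ H₂ (deltaOneLeft Δ₁ x) := by
  induction x using TensorProduct.induction_on with
  | zero => simp
  | add u v hu hv => simp only [map_add, hu, hv]
  | tmul a b =>
    have h1 : deltaOneLeft (Δ₁ := Δ₁) (H₂ := H₂) (a ⊗ₜ[R] b)
        = (Algebra.TensorProduct.assoc R R R H₁ H₁ H₂) ((Δ₁ a) ⊗ₜ[R] b) := by
      simp [deltaOneLeft]
    rw [leg32_tmul, h1]
    have h2 : deltaRight (deltaTensor Δ₁ Δ₂)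
        ((((1 : H₁) ⊗ₜ[R] b) : H₁ ⊗[R] H₂) ⊗ₜ[R] (a ⊗ₜ[R] (1 : H₂)))
        = (((1 : H₁) ⊗ₜ[R] b) : H₁ ⊗[R] H₂) ⊗ₜ[R]
            ((Algebra.TensorProduct.tensorTensorTensorComm R R R R H₁ H₁ H₂ H₂)
              ((Δ₁ a) ⊗ₜ[R] (1 : H₂ ⊗[R] H₂))) := by
      simp [deltaRight, deltaTensor]
    rw [h2]
    generalize (Δ₁ a) = y
    induction y using TensorProduct.induction_on with
    | zero => simp
    | add u v hu hv =>
      simp only [TensorProduct.tmul_add, TensorProduct.add_tmul, map_add, hu, hv]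
    | tmul a' a'' => simp [Algebra.TensorProduct.one_def]

lemma Gmap_cleg13 (x : H₁ ⊗[R] H₂) :
    Gmap R H₁ H₂ (cleg13 R H₁ H₂ x) = p54 R H₁ H₂ x := by
  induction x using TensorProduct.induction_on with
  | zero => simp
  | add u v hu hv => simp only [map_add, hu, hv]
  | tmul a b => simp [cleg13, Algebra.TensorProduct.one_def]

lemma Gmap_cleg12 (x : H₁ ⊗[R] H₂) :
    Gmap R H₁ H₂ (cleg12 R H₁ H₂ x) = p52 R H₁ H₂ x := by
  induction x using TensorProduct.induction_on with
  | zero => simp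
  | add u v hu hv => simp only [map_add, hu, hv]
  | tmul a b => simp [cleg12, Algebra.TensorProduct.one_def]

lemma Gmap'_bleg13 (x : H₁ ⊗[R] H₂) :
    Gmap' R H₁ H₂ (bleg13 R H₁ H₂ x) = p32 R H₁ H₂ x := by
  induction x using TensorProduct.induction_on with
  | zero => simp
  | add u v hu hv => simp only [map_add, hu, hv]
  | tmul a b => simp [bleg13, Algebra.TensorProduct.one_def]

lemma Gmap'_bleg23 (x : H₁ ⊗[R] H₂) :
    Gmap' R H₁ H₂ (bleg23 R H₁ H₂ x) = p52 R H₁ H₂ x := by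
  induction x using TensorProduct.induction_on with
  | zero => simp
  | add u v hu hv => simp only [map_add, hu, hv]
  | tmul a b => simp [bleg23, Algebra.TensorProduct.one_def]

lemma p32_comm_p54 (x y : H₁ ⊗[R] H₂) :
    p32 R H₁ H₂ x * p54 R H₁ H₂ y = p54 R H₁ H₂ y * p32 R H₁ H₂ x := by
  suffices h : (LinearMap.mulRight R (p54 R H₁ H₂ y)).comp (p32 R H₁ H₂).toLinearMap
      = (LinearMap.mulLeft R (p54 R H₁ H₂ y)).comp (p32 R H₁ H₂).toLinearMap by
    exact DFunLike.congr_fun h x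
  apply TensorProduct.ext'
  intro a b
  suffices h2 : (LinearMap.mulLeft R (p32 R H₁ H₂ (a ⊗ₜ[R] b))).comp (p54 R H₁ H₂).toLinearMap
      = (LinearMap.mulRight R (p32 R H₁ H₂ (a ⊗ₜ[R] b))).comp (p54 R H₁ H₂).toLinearMap by
    have := DFunLike.congr_fun h2 y
    simpa using this
  apply TensorProduct.ext'
  intro c d
  simp only [LinearMap.coe_comp, Function.comp_apply, AlgHom.toLinearMap_apply,
    LinearMap.mulLeft_apply, LinearMap.mulRight_apply, p32_tmul, p54_tmul,
    Algebra.TensorProduct.tmul_mul_tmul, one_mul, mul_one]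

end Aux2
set_option maxHeartbeats 1000000
set_option synthInstance.maxHeartbeats 1000000

/-- If `X ∈ H₁ ⊗ H₂` is an invertible skew bicharacter, then
`Ω := X₍₃₂₎` is an invertible 2-cocycle for the tensor product coproduct `Δ⊗`
on `H = H₁ ⊗ H₂`. -/
theorem skew_bicharacter_gives_cocycle {R H₁ H₂ : Type*} [CommRing R]
    [Ring H₁] [Algebra R H₁] [Ring H₂] [Algebra R H₂]
    (Δ₁ : H₁ →ₐ[R] H₁ ⊗[R] H₁) (hΔ₁ : Coassoc Δ₁)
    (Δ₂ : H₂ →ₐ[R] H₂ ⊗[R] H₂) (hΔ₂ : Coassoc Δ₂)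
    (X Xinv : H₁ ⊗[R] H₂) (hX₁ : X * Xinv = 1) (hX₂ : Xinv * X = 1)
    (hbich : IsSkewBichar Δ₁ Δ₂ X) :
    (leg32 R H₁ H₂ X * leg32 R H₁ H₂ Xinv = 1 ∧
      leg32 R H₁ H₂ Xinv * leg32 R H₁ H₂ X = 1) ∧
    IsTwoCocycle (deltaTensor Δ₁ Δ₂) (leg32 R H₁ H₂ X) := by
  obtain ⟨hb1, hb2⟩ := hbich
  refine ⟨⟨?_, ?_⟩, ?_⟩
  · rw [← map_mul, hX₁, map_one]
  · rw [← map_mul, hX₂, map_one]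
  · unfold IsTwoCocycle
    have hL : deltaLeft (deltaTensor Δ₁ Δ₂) (leg32 R H₁ H₂ X)
        = p54 R H₁ H₂ X * p52 R H₁ H₂ X := by
      rw [keyL Δ₁ Δ₂ X, hb2, map_mul, Gmap_cleg13, Gmap_cleg12]
    have hR : deltaRight (deltaTensor Δ₁ Δ₂) (leg32 R H₁ H₂ X)
        = p32 R H₁ H₂ X * p52 R H₁ H₂ X := by
      rw [keyR Δ₁ Δ₂ X, hb1, map_mul, Gmap'_bleg13, Gmap'_bleg23]
    have e1 : leg12 R (H₁ ⊗[R] H₂) (leg32 R H₁ H₂ X) = p32 R H₁ H₂ X := rfl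
    have e2 : leg23 R (H₁ ⊗[R] H₂) (leg32 R H₁ H₂ X) = p54 R H₁ H₂ X := rfl
    rw [hL, hR, e1, e2, ← mul_assoc, ← mul_assoc, p32_comm_p54]
end

section
/- Let H be a Hopf-type algebra with coassociative coproduct Δ and let R : H → H be a bijective linear map which is anti-multiplicative (R(xy) = R(y)R(x)), unital, and anti-comultiplicative with respect to the opposite coproduct: Δ ∘ R = (R ⊗ R) ∘ Δᵒᵖ, where Δᵒᵖ = flip ∘ Δ. If Ω ∈ H ⊗ H is an invertible 2-cocycle for Δ, then the conjugate element Ω_c := (R ⊗ R)(Ω₍₂₁₎⁻¹) (where Ω₍₂₁₎ is Ω with legs flipped) is again an invertible 2-cocycle for Δ. -/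
open scoped TensorProduct

section Aux

variable {R H : Type*} [CommRing R] [Ring H] [Algebra R H]

/-- `(ρ ⊗ ρ) ∘ flip` on `H ⊗ H`. -/
noncomputable def flipMap (ρ : H →ₗ[R] H) : H ⊗[R] H →ₗ[R] H ⊗[R] H :=
  (TensorProduct.map ρ ρ) ∘ₗ (TensorProduct.comm R H H).toLinearMap

lemma flipMap_tmul (ρ : H →ₗ[R] H) (a b : H) : flipMap ρ (a ⊗ₜ[R] b) = ρ b ⊗ₜ[R] ρ a := rfl

lemma flipMap_one (ρ : H →ₗ[R] H) (hone : ρ 1 = 1) : flipMap ρ (1 : H ⊗[R] H) = 1 := by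
  rw [Algebra.TensorProduct.one_def, flipMap_tmul, hone]

lemma flipMap_antimul (ρ : H →ₗ[R] H) (hanti : ∀ x y : H, ρ (x * y) = ρ y * ρ x)
    (x y : H ⊗[R] H) : flipMap ρ (x * y) = flipMap ρ y * flipMap ρ x := by
  induction x using TensorProduct.induction_on with
  | zero => simp
  | tmul a b =>
    induction y using TensorProduct.induction_on with
    | zero => simp
    | tmul c d =>
      rw [Algebra.TensorProduct.tmul_mul_tmul, flipMap_tmul, flipMap_tmul, flipMap_tmul,
        Algebra.TensorProduct.tmul_mul_tmul, hanti, hanti]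
    | add y₁ y₂ h1 h2 => rw [mul_add, map_add, h1, h2, map_add, add_mul]
  | add x₁ x₂ h1 h2 => rw [add_mul, map_add, h1, h2, map_add, mul_add]

/-- Full leg-reversal composed with `ρ ⊗ ρ ⊗ ρ` on the triple tensor product. -/
noncomputable def flip3 (ρ : H →ₗ[R] H) : H ⊗[R] (H ⊗[R] H) →ₗ[R] H ⊗[R] (H ⊗[R] H) :=
  (Algebra.TensorProduct.assoc R R R H H H).toLinearMap ∘ₗ
  (TensorProduct.map (flipMap ρ) ρ) ∘ₗ (TensorProduct.comm R H (H ⊗[R] H)).toLinearMap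

lemma flip3_tmul (ρ : H →ₗ[R] H) (a : H) (u : H ⊗[R] H) :
    flip3 ρ (a ⊗ₜ[R] u) = (Algebra.TensorProduct.assoc R R R H H H) (flipMap ρ u ⊗ₜ[R] ρ a) := rfl

lemma flip3_antimul (ρ : H →ₗ[R] H) (hanti : ∀ x y : H, ρ (x * y) = ρ y * ρ x)
    (x y : H ⊗[R] (H ⊗[R] H)) : flip3 ρ (x * y) = flip3 ρ y * flip3 ρ x := by
  induction x using TensorProduct.induction_on with
  | zero => simp
  | tmul a u =>
    induction y using TensorProduct.induction_on with
    | zero => simp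
    | tmul c v =>
      rw [Algebra.TensorProduct.tmul_mul_tmul, flip3_tmul, flip3_tmul, flip3_tmul,
        ← map_mul, Algebra.TensorProduct.tmul_mul_tmul, hanti,
        flipMap_antimul ρ hanti]
    | add y₁ y₂ h1 h2 => rw [mul_add, map_add, h1, h2, map_add, add_mul]
  | add x₁ x₂ h1 h2 => rw [add_mul, map_add, h1, h2, map_add, mul_add]

lemma flip3_assoc_tmul (ρ : H →ₗ[R] H) (v : H ⊗[R] H) (c : H) :
    flip3 ρ ((Algebra.TensorProduct.assoc R R R H H H) (v ⊗ₜ[R] c)) = ρ c ⊗ₜ[R] flipMap ρ v := by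
  induction v using TensorProduct.induction_on with
  | zero => simp
  | tmul x y =>
    rw [Algebra.TensorProduct.assoc_tmul, flip3_tmul, flipMap_tmul, flipMap_tmul,
      Algebra.TensorProduct.assoc_tmul]
  | add v₁ v₂ h1 h2 =>
    rw [TensorProduct.add_tmul, map_add, map_add, h1, h2, map_add, TensorProduct.tmul_add]

lemma leg12_flipMap (ρ : H →ₗ[R] H) (hone : ρ 1 = 1) (u : H ⊗[R] H) :
    leg12 R H (flipMap ρ u) = flip3 ρ (leg23 R H u) := by
  induction u using TensorProduct.induction_on with
  | zero => simp
  | tmul a b =>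
    rw [flipMap_tmul]
    show (ρ b) ⊗ₜ[R] ((ρ a) ⊗ₜ[R] 1) = flip3 ρ ((1 : H) ⊗ₜ[R] (a ⊗ₜ[R] b))
    rw [flip3_tmul, flipMap_tmul, Algebra.TensorProduct.assoc_tmul, hone]
  | add u₁ u₂ h1 h2 => rw [map_add, map_add, h1, h2, map_add, map_add]

lemma leg23_flipMap (ρ : H →ₗ[R] H) (hone : ρ 1 = 1) (u : H ⊗[R] H) :
    leg23 R H (flipMap ρ u) = flip3 ρ (leg12 R H u) := by
  induction u using TensorProduct.induction_on with
  | zero => simp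
  | tmul a b =>
    rw [flipMap_tmul]
    show (1 : H) ⊗ₜ[R] ((ρ b) ⊗ₜ[R] (ρ a)) = flip3 ρ (a ⊗ₜ[R] (b ⊗ₜ[R] (1 : H)))
    rw [flip3_tmul, flipMap_tmul, Algebra.TensorProduct.assoc_tmul, hone]
  | add u₁ u₂ h1 h2 => rw [map_add, map_add, h1, h2, map_add, map_add]

lemma deltaLeft_flipMap (Δ : H →ₐ[R] H ⊗[R] H) (ρ : H →ₗ[R] H)
    (hacomul : ∀ x : H, Δ (ρ x) =
      TensorProduct.map ρ ρ ((TensorProduct.comm R H H) (Δ x))) (u : H ⊗[R] H) :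
    deltaLeft Δ (flipMap ρ u) = flip3 ρ (deltaRight Δ u) := by
  induction u using TensorProduct.induction_on with
  | zero => simp
  | tmul a b =>
    rw [flipMap_tmul]
    show (Algebra.TensorProduct.assoc R R R H H H) (Δ (ρ b) ⊗ₜ[R] ρ a)
      = flip3 ρ (a ⊗ₜ[R] Δ b)
    rw [flip3_tmul, hacomul b]
    rfl
  | add u₁ u₂ h1 h2 => rw [map_add, map_add, h1, h2, map_add, map_add]

lemma deltaRight_flipMap (Δ : H →ₐ[R] H ⊗[R] H) (ρ : H →ₗ[R] H)
    (hacomul : ∀ x : H, Δ (ρ x) =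
      TensorProduct.map ρ ρ ((TensorProduct.comm R H H) (Δ x))) (u : H ⊗[R] H) :
    deltaRight Δ (flipMap ρ u) = flip3 ρ (deltaLeft Δ u) := by
  induction u using TensorProduct.induction_on with
  | zero => simp
  | tmul a b =>
    rw [flipMap_tmul]
    show (ρ b) ⊗ₜ[R] Δ (ρ a)
      = flip3 ρ ((Algebra.TensorProduct.assoc R R R H H H) (Δ a ⊗ₜ[R] b))
    rw [flip3_assoc_tmul, hacomul a]
    rfl
  | add u₁ u₂ h1 h2 => rw [map_add, map_add, h1, h2, map_add, map_add]

end Aux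

/-- If `ρ` is a bijective, unital, anti-multiplicative linear map which is
anti-comultiplicative (`Δ ∘ ρ = (ρ ⊗ ρ) ∘ Δᵒᵖ`), and `Ω` is an invertible 2-cocycle for a
coassociative `Δ`, then the conjugate element `Ω_c := (ρ ⊗ ρ)(flip Ω⁻¹)` is again an
invertible 2-cocycle for `Δ` (with inverse `(ρ ⊗ ρ)(flip Ω)`). -/
theorem conjugate_cocycle_is_cocycle {R H : Type*} [CommRing R] [Ring H] [Algebra R H]
    (Δ : H →ₐ[R] H ⊗[R] H) (hΔ : Coassoc Δ)
    (ρ : H →ₗ[R] H) (hbij : Function.Bijective ρ)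
    (hanti : ∀ x y : H, ρ (x * y) = ρ y * ρ x) (hone : ρ 1 = 1)
    (hacomul : ∀ x : H, Δ (ρ x) =
      TensorProduct.map ρ ρ ((TensorProduct.comm R H H) (Δ x)))
    (Ω Ωinv : H ⊗[R] H) (hinv₁ : Ω * Ωinv = 1) (hinv₂ : Ωinv * Ω = 1)
    (hcoc : IsTwoCocycle Δ Ω) :
    (TensorProduct.map ρ ρ ((TensorProduct.comm R H H) Ωinv) *
        TensorProduct.map ρ ρ ((TensorProduct.comm R H H) Ω) = 1 ∧
      TensorProduct.map ρ ρ ((TensorProduct.comm R H H) Ω) *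
        TensorProduct.map ρ ρ ((TensorProduct.comm R H H) Ωinv) = 1) ∧
    IsTwoCocycle Δ (TensorProduct.map ρ ρ ((TensorProduct.comm R H H) Ωinv)) := by
  have hP : ∀ x : H ⊗[R] H,
      TensorProduct.map ρ ρ ((TensorProduct.comm R H H) x) = flipMap ρ x := fun _ => rfl
  refine ⟨⟨?_, ?_⟩, ?_⟩
  · rw [hP, hP, ← flipMap_antimul ρ hanti, hinv₁, flipMap_one ρ hone]
  · rw [hP, hP, ← flipMap_antimul ρ hanti, hinv₂, flipMap_one ρ hone]
  · unfold IsTwoCocycle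
    rw [hP, leg12_flipMap ρ hone, deltaLeft_flipMap Δ ρ hacomul,
      leg23_flipMap ρ hone, deltaRight_flipMap Δ ρ hacomul,
      ← flip3_antimul ρ hanti, ← flip3_antimul ρ hanti]
    congr 1
    -- key: `deltaRight Δ Ωinv * leg23 R H Ωinv = deltaLeft Δ Ωinv * leg12 R H Ωinv`
    have h12 : leg12 R H Ωinv * leg12 R H Ω = 1 := by rw [← map_mul, hinv₂, map_one]
    have h12' : leg12 R H Ω * leg12 R H Ωinv = 1 := by rw [← map_mul, hinv₁, map_one]
    have hdl : deltaLeft Δ Ωinv * deltaLeft Δ Ω = 1 := by rw [← map_mul, hinv₂, map_one]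
    have hdl' : deltaLeft Δ Ω * deltaLeft Δ Ωinv = 1 := by rw [← map_mul, hinv₁, map_one]
    have h23 : leg23 R H Ωinv * leg23 R H Ω = 1 := by rw [← map_mul, hinv₂, map_one]
    have hdr : deltaRight Δ Ωinv * deltaRight Δ Ω = 1 := by rw [← map_mul, hinv₂, map_one]
    have key1 : (deltaRight Δ Ωinv * leg23 R H Ωinv) * (leg12 R H Ω * deltaLeft Δ Ω) = 1 := by
      rw [hcoc, mul_assoc, ← mul_assoc (leg23 R H Ωinv), h23, one_mul, hdr]
    have key2 : (leg12 R H Ω * deltaLeft Δ Ω) * (deltaLeft Δ Ωinv * leg12 R H Ωinv) = 1 := by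
      rw [mul_assoc, ← mul_assoc (deltaLeft Δ Ω), hdl', one_mul, h12']
    calc deltaRight Δ Ωinv * leg23 R H Ωinv
        = (deltaRight Δ Ωinv * leg23 R H Ωinv) *
            ((leg12 R H Ω * deltaLeft Δ Ω) * (deltaLeft Δ Ωinv * leg12 R H Ωinv)) := by
          rw [key2, mul_one]
      _ = ((deltaRight Δ Ωinv * leg23 R H Ωinv) * (leg12 R H Ω * deltaLeft Δ Ω)) *
            (deltaLeft Δ Ωinv * leg12 R H Ωinv) := by simp only [mul_assoc]
      _ = deltaLeft Δ Ωinv * leg12 R H Ωinv := by rw [key1, one_mul]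
end

section
/- Let (L, Δ) be an algebra with coassociative coproduct and counit, and let X ∈ L ⊗ L be an invertible skew bicharacter satisfying X Δ(x) X⁻¹ = Δᵒᵖ(x) for all x ∈ L. Form H = L ⊗ L with tensor coproduct Δ⊗(x⊗y) = Δ(x)₁₃ Δ(y)₂₄ and twisted coproduct Δ_Ω := Ω Δ⊗(·) Ω⁻¹ where Ω = X₍₃₂₎. Then the map ι : L → H, ι(x) = Δ(x), is an algebra homomorphism intertwining coproducts: Δ_Ω(Δ(x)) = (Δ ⊗ Δ)(Δ(x)) for all x ∈ L, i.e. Ω · Δ⊗(Δ(x)) · Ω⁻¹ = (Δ ⊗ Δ)(Δ(x)). -/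
open scoped TensorProduct
set_option synthInstance.maxHeartbeats 1000000
set_option maxHeartbeats 1600000

/-- The counit axioms `(ε⊗id)Δ = id = (id⊗ε)Δ`. -/
def IsCounit {R H : Type*} [CommRing R] [Ring H] [Algebra R H]
    (Δ : H →ₐ[R] H ⊗[R] H) (ε : H →ₐ[R] R) : Prop :=
  (∀ x : H, (Algebra.TensorProduct.lid R H)
      (Algebra.TensorProduct.map ε (AlgHom.id R H) (Δ x)) = x) ∧
  (∀ x : H, (Algebra.TensorProduct.rid R R H)
      (Algebra.TensorProduct.map (AlgHom.id R H) ε (Δ x)) = x)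


section AuxDrinfeld

variable {R L : Type*} [CommRing R] [Ring L] [Algebra R L]

/-- `a ⊗ ((u ⊗ v) ⊗ d) ↦ (a ⊗ u) ⊗ (v ⊗ d)`. -/
noncomputable def psiAux (R L : Type*) [CommRing R] [Ring L] [Algebra R L] :
    (L ⊗[R] ((L ⊗[R] L) ⊗[R] L)) →ₐ[R] (L ⊗[R] L) ⊗[R] (L ⊗[R] L) :=
  (Algebra.TensorProduct.assoc R R R L L (L ⊗[R] L)).symm.toAlgHom.comp
    (Algebra.TensorProduct.map (AlgHom.id R L)
      (Algebra.TensorProduct.assoc R R R L L L).toAlgHom)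

@[simp] lemma psiAux_tmul (a u v d : L) :
    psiAux R L (a ⊗ₜ ((u ⊗ₜ v) ⊗ₜ d)) = (a ⊗ₜ u) ⊗ₜ (v ⊗ₜ d) := by
  simp [psiAux]

@[simp] lemma comm_comm_apply (m : L ⊗[R] L) :
    (Algebra.TensorProduct.comm R L L) ((Algebra.TensorProduct.comm R L L) m) = m := by
  induction m using TensorProduct.induction_on with
  | zero => simp
  | tmul a b => simp
  | add p q hp hq => simp only [map_add, hp, hq]

lemma leg32_eq_psiAux (m : L ⊗[R] L) :
    leg32 R L L m
      = psiAux R L ((1 : L) ⊗ₜ (((Algebra.TensorProduct.comm R L L) m) ⊗ₜ (1 : L))) := by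
  induction m using TensorProduct.induction_on with
  | zero => simp
  | tmul a b => simp [leg32]
  | add p q hp hq => simp [map_add, TensorProduct.add_tmul, TensorProduct.tmul_add, hp, hq]

/-- conjugation of the middle tensor factor, as a linear map identity. -/
lemma conj_middle (Y Yi : L ⊗[R] L) :
    (LinearMap.mulRight R ((1 : L) ⊗ₜ[R] (Yi ⊗ₜ[R] (1 : L)))) ∘ₗ
        (LinearMap.mulLeft R ((1 : L) ⊗ₜ[R] (Y ⊗ₜ[R] (1 : L))))
      = TensorProduct.map LinearMap.id
          (TensorProduct.map (LinearMap.mulLeft R Y ∘ₗ LinearMap.mulRight R Yi)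
            LinearMap.id) := by
  ext a u v d
  simp [Algebra.TensorProduct.tmul_mul_tmul, mul_assoc]

/-- transporting a pointwise-on-`Δ`-images identity under `id ⊗ (· ∘ Δ)`. -/
lemma middle_congr {W : Type*} [Ring W] [Algebra R W] (Δ : L →ₐ[R] L ⊗[R] L)
    (f g : (L ⊗[R] L) →ₐ[R] W) (h : ∀ y : L, f (Δ y) = g (Δ y)) (z : L ⊗[R] L) :
    Algebra.TensorProduct.map (AlgHom.id R L) f
        (Algebra.TensorProduct.map (AlgHom.id R L) Δ z)
      = Algebra.TensorProduct.map (AlgHom.id R L) g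
        (Algebra.TensorProduct.map (AlgHom.id R L) Δ z) := by
  induction z using TensorProduct.induction_on with
  | zero => simp
  | tmul a b => simp [h b]
  | add p q hp hq => simp only [map_add, hp, hq]

lemma split_map (Δ₁ Δ₂ : L →ₐ[R] L ⊗[R] L) (z : L ⊗[R] L) :
    Algebra.TensorProduct.map Δ₁ Δ₂ z
      = Algebra.TensorProduct.map (AlgHom.id R (L ⊗[R] L)) Δ₂
          (Algebra.TensorProduct.map Δ₁ (AlgHom.id R L) z) := by
  induction z using TensorProduct.induction_on with
  | zero => simp
  | tmul a b => simp
  | add p q hp hq => simp only [map_add, hp, hq]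

lemma first_comp (σA : (L ⊗[R] L) →ₐ[R] L ⊗[R] L) (Δ : L →ₐ[R] L ⊗[R] L)
    (z : L ⊗[R] L) :
    Algebra.TensorProduct.map (σA.comp Δ) (AlgHom.id R L) z
      = Algebra.TensorProduct.map σA (AlgHom.id R L)
          (Algebra.TensorProduct.map Δ (AlgHom.id R L) z) := by
  induction z using TensorProduct.induction_on with
  | zero => simp
  | tmul a b => simp
  | add p q hp hq => simp only [map_add, hp, hq]

lemma claim_a_plumbing (Δ : L →ₐ[R] L ⊗[R] L) (v : L ⊗[R] (L ⊗[R] L)) :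
    (Algebra.TensorProduct.tensorTensorTensorComm R R R R L L L L)
        (Algebra.TensorProduct.map (AlgHom.id R (L ⊗[R] L)) Δ
          ((Algebra.TensorProduct.assoc R R R L L L).symm v))
      = psiAux R L
          (Algebra.TensorProduct.map (AlgHom.id R L)
            ((Algebra.TensorProduct.map
                (Algebra.TensorProduct.comm R L L).toAlgHom (AlgHom.id R L)).comp
              ((Algebra.TensorProduct.assoc R R R L L L).symm.toAlgHom.comp
                (Algebra.TensorProduct.map (AlgHom.id R L) Δ))) v) := by
  induction v using TensorProduct.induction_on with
  | zero => simp
  | tmul a m =>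
    induction m using TensorProduct.induction_on with
    | zero => simp
    | tmul b c =>
      simp only [Algebra.TensorProduct.assoc_symm_tmul, Algebra.TensorProduct.map_tmul,
        AlgHom.coe_id, id_eq, AlgHom.coe_comp, AlgEquiv.toAlgHom_eq_coe, AlgHom.coe_coe,
        Function.comp_apply]
      generalize Δ c = e
      induction e using TensorProduct.induction_on with
      | zero => simp
      | tmul c₁ c₂ => simp
      | add p q hp hq => simp only [map_add, TensorProduct.tmul_add, TensorProduct.add_tmul, hp, hq]
    | add p q hp hq => simp only [map_add, TensorProduct.tmul_add, hp, hq]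
  | add p q hp hq => simp only [map_add, hp, hq]

lemma claim_d_plumbing (Δ : L →ₐ[R] L ⊗[R] L) (v : L ⊗[R] (L ⊗[R] L)) :
    psiAux R L
        (Algebra.TensorProduct.map (AlgHom.id R L)
          ((Algebra.TensorProduct.assoc R R R L L L).symm.toAlgHom.comp
            (Algebra.TensorProduct.map (AlgHom.id R L) Δ)) v)
      = Algebra.TensorProduct.map (AlgHom.id R (L ⊗[R] L)) Δ
          ((Algebra.TensorProduct.assoc R R R L L L).symm v) := by
  induction v using TensorProduct.induction_on with
  | zero => simp
  | tmul a m =>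
    induction m using TensorProduct.induction_on with
    | zero => simp
    | tmul b c =>
      simp only [Algebra.TensorProduct.assoc_symm_tmul, Algebra.TensorProduct.map_tmul,
        AlgHom.coe_id, id_eq, AlgHom.coe_comp, AlgEquiv.toAlgHom_eq_coe, AlgHom.coe_coe,
        Function.comp_apply]
      generalize Δ c = e
      induction e using TensorProduct.induction_on with
      | zero => simp
      | tmul c₁ c₂ => simp
      | add p q hp hq => simp only [map_add, TensorProduct.tmul_add, TensorProduct.add_tmul, hp, hq]
    | add p q hp hq => simp only [map_add, TensorProduct.tmul_add, hp, hq]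
  | add p q hp hq => simp only [map_add, hp, hq]

lemma claim_c_plumbing (Δ : L →ₐ[R] L ⊗[R] L) (Y Yi : L ⊗[R] L)
    (hq : ∀ y : L, Y * ((Algebra.TensorProduct.comm R L L) (Δ y) * Yi) = Δ y)
    (w : L ⊗[R] (L ⊗[R] L)) :
    TensorProduct.map LinearMap.id
        (TensorProduct.map (LinearMap.mulLeft R Y ∘ₗ LinearMap.mulRight R Yi)
          LinearMap.id)
        (Algebra.TensorProduct.map (AlgHom.id R L)
          (Algebra.TensorProduct.map
            ((Algebra.TensorProduct.comm R L L).toAlgHom.comp Δ) (AlgHom.id R L)) w)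
      = Algebra.TensorProduct.map (AlgHom.id R L)
          (Algebra.TensorProduct.map Δ (AlgHom.id R L)) w := by
  induction w using TensorProduct.induction_on with
  | zero => simp
  | tmul a m =>
    induction m using TensorProduct.induction_on with
    | zero => simp
    | tmul b c => simp [hq b]
    | add p q hp hq' => simp only [map_add, TensorProduct.tmul_add, hp, hq']
  | add p q hp hq' => simp only [map_add, hp, hq']

end AuxDrinfeld

/-- Let `X` be an invertible skew bicharacter on `(L, Δ)` with
`X Δ(x) X⁻¹ = Δᵒᵖ(x)`. Forming `H = L ⊗ L` with tensor coproduct `Δ⊗` and the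
cocycle `Ω = X₍₃₂₎`, the map `ι = Δ : L → H` intertwines the twisted coproduct
`Δ_Ω = Ω Δ⊗(·) Ω⁻¹` with `(Δ ⊗ Δ)`: `Ω Δ⊗(Δ x) Ω⁻¹ = (Δ ⊗ Δ)(Δ x)`. -/
theorem drinfeld_double_subgroup_embedding {R L : Type*} [CommRing R] [Ring L] [Algebra R L]
    (Δ : L →ₐ[R] L ⊗[R] L) (hΔ : Coassoc Δ)
    (ε : L →ₐ[R] R) (hε : IsCounit Δ ε)
    (X Xinv : L ⊗[R] L) (hX₁ : X * Xinv = 1) (hX₂ : Xinv * X = 1)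
    (hbich : IsSkewBichar Δ Δ X)
    (hqt : ∀ x : L, X * Δ x * Xinv = (Algebra.TensorProduct.comm R L L) (Δ x)) :
    ∀ x : L,
      leg32 R L L X * deltaTensor Δ Δ (Δ x) * leg32 R L L Xinv =
        Algebra.TensorProduct.map Δ Δ (Δ x) := by
  intro x
  -- shorthand
  set Y := (Algebra.TensorProduct.comm R L L) X with hY
  set Yi := (Algebra.TensorProduct.comm R L L) Xinv with hYi
  -- pointwise coassociativity
  have h0 : ∀ y : L,
      Algebra.TensorProduct.map Δ (AlgHom.id R L) (Δ y)
        = (Algebra.TensorProduct.assoc R R R L L L).symm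
            (Algebra.TensorProduct.map (AlgHom.id R L) Δ (Δ y)) := by
    intro y
    have h := hΔ y
    simp only [deltaLeft, deltaRight, AlgHom.comp_apply, AlgEquiv.toAlgHom_eq_coe,
      AlgHom.coe_coe] at h
    rw [← h]
    exact (AlgEquiv.symm_apply_apply _ _).symm
  -- pointwise flipped quasitriangularity
  have hqt' : ∀ y : L, Y * ((Algebra.TensorProduct.comm R L L) (Δ y) * Yi) = Δ y := by
    intro y
    have h := congrArg (Algebra.TensorProduct.comm R L L) (hqt y)
    rw [map_mul, map_mul] at h
    calc Y * ((Algebra.TensorProduct.comm R L L) (Δ y) * Yi)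
        = Y * (Algebra.TensorProduct.comm R L L) (Δ y) * Yi := by rw [mul_assoc]
    _ = (Algebra.TensorProduct.comm R L L) ((Algebra.TensorProduct.comm R L L) (Δ y)) := h
    _ = Δ y := comm_comm_apply _
  -- middle maps
  set f₁ : (L ⊗[R] L) →ₐ[R] (L ⊗[R] L) ⊗[R] L :=
    Algebra.TensorProduct.map
      ((Algebra.TensorProduct.comm R L L).toAlgHom.comp Δ) (AlgHom.id R L) with hf₁
  set f₂ : (L ⊗[R] L) →ₐ[R] (L ⊗[R] L) ⊗[R] L :=
    Algebra.TensorProduct.map Δ (AlgHom.id R L) with hf₂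
  set g : (L ⊗[R] L) →ₐ[R] (L ⊗[R] L) ⊗[R] L :=
    (Algebra.TensorProduct.assoc R R R L L L).symm.toAlgHom.comp
      (Algebra.TensorProduct.map (AlgHom.id R L) Δ) with hg
  set g₁ : (L ⊗[R] L) →ₐ[R] (L ⊗[R] L) ⊗[R] L :=
    (Algebra.TensorProduct.map
      (Algebra.TensorProduct.comm R L L).toAlgHom (AlgHom.id R L)).comp g with hg₁
  have e₂ : ∀ y : L, f₂ (Δ y) = g (Δ y) := by
    intro y
    rw [hf₂, hg, h0 y]
    simp [AlgHom.comp_apply]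
  have e₁ : ∀ y : L, f₁ (Δ y) = g₁ (Δ y) := by
    intro y
    rw [hf₁, hg₁,
      first_comp (Algebra.TensorProduct.comm R L L).toAlgHom Δ (Δ y)]
    simp only [AlgHom.comp_apply]
    rw [← e₂ y, hf₂]
  -- the inner element
  set W := Algebra.TensorProduct.map (AlgHom.id R L) Δ (Δ x) with hW
  -- Step (a): rewrite `deltaTensor` through `psiAux`
  have Sa : deltaTensor Δ Δ (Δ x)
      = psiAux R L (Algebra.TensorProduct.map (AlgHom.id R L) f₁ W) := by
    have h1 : deltaTensor Δ Δ (Δ x)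
        = (Algebra.TensorProduct.tensorTensorTensorComm R R R R L L L L)
            (Algebra.TensorProduct.map Δ Δ (Δ x)) := by
      simp [deltaTensor]
    rw [h1, split_map Δ Δ (Δ x), h0 x]
    have h2 := claim_a_plumbing Δ W
    rw [hW] at h2 ⊢
    rw [h2, middle_congr Δ f₁ g₁ e₁ (Δ x)]
  -- Step (d)
  have Sd : psiAux R L (Algebra.TensorProduct.map (AlgHom.id R L) f₂ W)
      = Algebra.TensorProduct.map Δ Δ (Δ x) := by
    rw [hW, middle_congr Δ f₂ g e₂ (Δ x), ← hW]
    have h3 := claim_d_plumbing Δ W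
    rw [hg, h3, ← h0 x, ← split_map Δ Δ (Δ x)]
  -- assemble
  rw [Sa, leg32_eq_psiAux X, leg32_eq_psiAux Xinv, ← hY, ← hYi, ← map_mul, ← map_mul]
  have hc := LinearMap.congr_fun (conj_middle (R := R) (L := L) Y Yi)
      (Algebra.TensorProduct.map (AlgHom.id R L) f₁ W)
  simp only [LinearMap.comp_apply, LinearMap.mulLeft_apply, LinearMap.mulRight_apply] at hc
  rw [hc, hf₁, claim_c_plumbing Δ Y Yi hqt' W, ← hf₂, Sd]
end

section
/- Let A be an associative ring and e ∈ A an idempotent such that both e and f := 1 − e are full, meaning A e A = A and A f A = A (as two-sided ideals, without closures). If x ∈ e A e satisfies x · (e A f) = 0, then x = 0. Consequently, any ring homomorphism out of A that is injective on the corner e A f is injective on e A e. -/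
/-- Let `A` be a unital associative ring and `e ∈ A` an idempotent such
that both `e` and `f := 1 - e` are full (`A e A = A` and `A f A = A`, i.e. every element of
`A` is a finite sum of elements `a * e * b`, resp. `a * f * b`). If `x ∈ e A e` satisfies
`x · (e A f) = 0`, then `x = 0`. Consequently, any ring homomorphism out of `A` that is
injective on the corner `e A f` is injective on `e A e`. -/
theorem full_idempotent_corner_injective {A B : Type*} [Ring A] [Ring B]
    (e : A) (he : e * e = e)
    (hfull_e : ∀ y : A, y ∈ AddSubmonoid.closure {z : A | ∃ a b : A, z = a * e * b})
    (hfull_f : ∀ y : A,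
      y ∈ AddSubmonoid.closure {z : A | ∃ a b : A, z = a * (1 - e) * b}) :
    (∀ x : A, e * x * e = x → (∀ a : A, x * (e * a * (1 - e)) = 0) → x = 0) ∧
    (∀ φ : A →+* B, (∀ a : A, φ (e * a * (1 - e)) = 0 → e * a * (1 - e) = 0) →
      ∀ x : A, e * x * e = x → φ x = 0 → x = 0) := by
  have key : ∀ x : A, e * x * e = x → (∀ a : A, x * (e * a * (1 - e)) = 0) → x = 0 := by
    intro x hx h0
    have hxe : x * e = x := by
      calc x * e = (e * x * e) * e := by rw [hx]
        _ = e * x * (e * e) := by noncomm_ring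
        _ = x := by rw [he, hx]
    have hz : ∀ z ∈ AddSubmonoid.closure {z : A | ∃ a b : A, z = a * (1 - e) * b},
        x * z = 0 := by
      intro z hz
      induction hz using AddSubmonoid.closure_induction with
      | mem z hzmem =>
        obtain ⟨a, b, rfl⟩ := hzmem
        have : x * (e * a * (1 - e)) = 0 := h0 a
        calc x * (a * (1 - e) * b) = (x * e) * (a * (1 - e)) * b := by
              rw [hxe]; noncomm_ring
          _ = (x * (e * a * (1 - e))) * b := by noncomm_ring
          _ = 0 := by rw [this, zero_mul]
      | zero => simp
      | add z w _ _ hz hw => rw [mul_add, hz, hw, add_zero]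
    have := hz 1 (hfull_f 1)
    rwa [mul_one] at this
  refine ⟨key, ?_⟩
  intro φ hφ x hx hφx
  refine key x hx fun a => ?_
  have hex : e * x = x := by
    calc e * x = e * (e * x * e) := by rw [hx]
      _ = (e * e) * x * e := by noncomm_ring
      _ = x := by rw [he, hx]
  have heq : x * (e * a * (1 - e)) = e * (x * e * a) * (1 - e) := by
    conv_lhs => rw [← hex]
    noncomm_ring
  have : φ (e * (x * e * a) * (1 - e)) = 0 := by
    rw [← heq, map_mul, hφx, zero_mul]
  rw [heq, hφ _ this]
end
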